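/- arXiv:1406.7651 — 8 statements merged into one kernel-verified Lean document; each statement's English description precedes it below -/
import Mathlib

section
/- Let p be a prime, n ≥ 1, F = GF(p), α a primitive element of GF(p^n), m the minimal polynomial of α over F, and A the n×n companion matrix of m over F. Then A is invertible and its multiplicative order (as an element of the group of invertible n×n matrices over F) is exactly p^n − 1. -/
/-! The order of an element `a` of a `K`-algebra depends only on its minimal polynomial, since
`a ^ k = 1` exactly when `minpoly K a` divides `X ^ k - 1`. So `A` has the order of `α`. -/

open Polynomial

theorem minpoly_dvd_X_pow_sub_one_iff {K R : Type*} [Field K] [Ring R] [Algebra K R]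
    (a : R) (k : ℕ) : minpoly K a ∣ X ^ k - 1 ↔ a ^ k = 1 := by
  rw [minpoly.dvd_iff, map_sub, map_pow, aeval_X, map_one, sub_eq_zero]

theorem orderOf_eq_of_minpoly_eq {K R S : Type*} [Field K] [Ring R] [Ring S]
    [Algebra K R] [Algebra K S] {a : R} {b : S} (h : minpoly K a = minpoly K b) :
    orderOf a = orderOf b :=
  orderOf_eq_orderOf_iff.2 fun k => by
    rw [← minpoly_dvd_X_pow_sub_one_iff (K := K), h, minpoly_dvd_X_pow_sub_one_iff]

theorem stmt1_general (p n : ℕ) [Fact p.Prime] (hn : 1 ≤ n)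
    (α : GaloisField p n) (hα : orderOf α = p ^ n - 1)
    (m : Polynomial (ZMod p)) (hm : m = minpoly (ZMod p) α)
    (A : Matrix (Fin n) (Fin n) (ZMod p))
    (hminA : minpoly (ZMod p) A = m) :
    IsUnit A ∧ orderOf A = p ^ n - 1 := by
  have hord : orderOf A = p ^ n - 1 := (orderOf_eq_of_minpoly_eq (hminA.trans hm)).trans hα
  have hpos : 0 < orderOf A := by
    rw [hord]
    exact Nat.sub_pos_of_lt (Nat.one_lt_pow (by omega) (Fact.out : p.Prime).one_lt)
  exact ⟨(orderOf_pos_iff.1 hpos).isUnit, hord⟩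

/-- Let `p` be a prime, `n ≥ 1`, `F = GF(p)`, `α` a primitive element
of `GF(pⁿ)`, `m` its minimal polynomial over `F`, and `A` the `n × n` companion matrix
of `m` over `F` (i.e. the matrix whose characteristic and minimal polynomials equal `m`).
Then `A` is invertible and its multiplicative order is exactly `pⁿ - 1`. -/
theorem stmt1 (p n : ℕ) [Fact p.Prime] (hn : 1 ≤ n)
    (α : GaloisField p n) (hα : orderOf α = p ^ n - 1)
    (m : Polynomial (ZMod p)) (hm : m = minpoly (ZMod p) α)
    (A : Matrix (Fin n) (Fin n) (ZMod p))
    (hchar : A.charpoly = m) (hminA : minpoly (ZMod p) A = m) :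
    IsUnit A ∧ orderOf A = p ^ n - 1 :=
  stmt1_general p n hn α hα m hm A hminA
end

section
/- Let p be a prime, n ≥ 3, F = GF(p), V = F^{n+1} with basis v₀, v₁, ..., v_n, U = span(v₁, ..., v_n), and W = Λ²V. Let f : V → W be the linear map whose matrix, with respect to the basis v₀,...,v_n of V and the basis of W ordered as v₀∧v₁, ..., v₀∧v_n, followed by the v_i∧v_j with 1 ≤ i < j ≤ n, is the block matrix [[b, c], [A, 0]] with b a 1×n row vector, c a nonzero 1×C(n,2) row vector, and A an invertible n×n matrix. If u ∈ U satisfies u ∧ w ∈ f(V) for all w ∈ V, then u = 0. -/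
/-!
Only the first row of `[[b, c], [A, 0]]` reaches the `Λ²U`-block, so the `Λ²U`-component of every
element of `f(V)` is a multiple of `c`. Given `i`, pick `j, k` distinct from `i` and from each
other. The `Λ²U`-components of `u ∧ v_j` and `u ∧ v_k` are then `α c` and `β c`; reading them at
`v_i ∧ v_j` and `v_i ∧ v_k` gives `± uᵢ² = (α c_{ij}) (β c_{ik}) = (α c_{ik}) (β c_{ij}) = 0`,
since `u ∧ v_j` has no `v_i ∧ v_k` coordinate and `u ∧ v_k` no `v_i ∧ v_j` coordinate. So `uᵢ` is
nilpotent, hence zero.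
-/

/-- The index type for the standard basis of the exterior square `Λ²V` of
`V = F^(n+1)` with basis `v₀, v₁, …, v_n` (here `V = (Fin 1 ⊕ Fin n) → F`, with
`v₀` indexed by `Sum.inl 0` and `v_{j+1}` by `Sum.inr j`): `Sum.inl j` indexes
`v₀ ∧ v_{j+1}` (the first `n` basis vectors) and `Sum.inr ⟨(i,j), _⟩` indexes
`v_{i+1} ∧ v_{j+1}` for `i < j` (the remaining `C(n,2)` basis vectors), in the
ordering prescribed by the paper. -/
abbrev WIdx (n : ℕ) : Type := Fin n ⊕ {q : Fin n × Fin n // q.1 < q.2}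

/-- The wedge product `V × V → Λ²V` of `V = F^(n+1)`, written in the coordinates of the
standard bases described in `WIdx`. -/
def wedge {F : Type*} [CommRing F] {n : ℕ} (x y : (Fin 1 ⊕ Fin n) → F) :
    WIdx n → F :=
  Sum.elim
    (fun j => x (Sum.inl 0) * y (Sum.inr j) - x (Sum.inr j) * y (Sum.inl 0))
    (fun q => x (Sum.inr q.1.1) * y (Sum.inr q.1.2) - x (Sum.inr q.1.2) * y (Sum.inr q.1.1))

open Matrix

theorem exists_pair_ne_ne_of_three_le {n : ℕ} (hn : 3 ≤ n) (i : Fin n) :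
    ∃ j k : Fin n, j ≠ i ∧ k ≠ i ∧ j ≠ k := by
  have hcard : 1 < (Finset.univ.erase i).card := by
    rw [Finset.card_erase_of_mem (Finset.mem_univ i), Finset.card_univ, Fintype.card_fin]
    omega
  obtain ⟨j, hj, k, hk, hjk⟩ := Finset.one_lt_card.mp hcard
  exact ⟨j, k, Finset.ne_of_mem_erase hj, Finset.ne_of_mem_erase hk, hjk⟩

theorem apply_inl_eq_zero_of_mem_span_single_inr {R ι κ : Type*} [Semiring R]
    [DecidableEq ι] [DecidableEq κ] {x : ι ⊕ κ → R}
    (hx : x ∈ Submodule.span R (Set.range fun k : κ => (Pi.single (Sum.inr k) 1 : ι ⊕ κ → R)))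
    (a : ι) : x (Sum.inl a) = 0 := by
  have hle : Submodule.span R (Set.range fun k : κ => (Pi.single (Sum.inr k) 1 : ι ⊕ κ → R)) ≤
      LinearMap.ker (LinearMap.proj (Sum.inl a)) := by
    rw [Submodule.span_le]
    rintro _ ⟨k, rfl⟩
    simp
  simpa using hle hx

theorem exists_mul_eq_of_mem_range_vecMulLinear_fromBlocks {R l m n : Type*} [CommSemiring R]
    [Fintype l] (b : Matrix (Fin 1) m R) (c : Matrix (Fin 1) n R) (A : Matrix l m R)
    {y : m ⊕ n → R} (hy : y ∈ LinearMap.range (fromBlocks b c A 0).vecMulLinear) :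
    ∃ a : R, ∀ q, y (Sum.inr q) = a * c 0 q := by
  obtain ⟨x, rfl⟩ := hy
  exact ⟨x (Sum.inl 0), fun q => by simp [vecMul, dotProduct]⟩

def sortedPair {n : ℕ} {i j : Fin n} (h : i ≠ j) : {q : Fin n × Fin n // q.1 < q.2} :=
  if hlt : i < j then ⟨(i, j), hlt⟩ else ⟨(j, i), lt_of_le_of_ne (not_lt.mp hlt) h.symm⟩

section Wedge

variable {F : Type*} [CommRing F] {n : ℕ} (u : Fin 1 ⊕ Fin n → F)

theorem wedge_single_inr_sortedPair {i j : Fin n} (h : i ≠ j) :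
    wedge u (Pi.single (Sum.inr j) 1) (Sum.inr (sortedPair h)) = u (Sum.inr i) ∨
      wedge u (Pi.single (Sum.inr j) 1) (Sum.inr (sortedPair h)) = -u (Sum.inr i) := by
  unfold sortedPair
  split_ifs
  · left
    simp [wedge, Pi.single_apply, h]
  · right
    simp [wedge, Pi.single_apply, h]

theorem wedge_single_inr_sortedPair_of_ne {i j k : Fin n} (h : i ≠ k) (hi : j ≠ i) (hk : j ≠ k) :
    wedge u (Pi.single (Sum.inr j) 1) (Sum.inr (sortedPair h)) = 0 := by
  unfold sortedPair
  split_ifs <;> simp [wedge, Pi.single_apply, hi.symm, hk.symm]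

end Wedge

theorem apply_inr_eq_zero_of_forall_wedge_single_inr_eq_mul {R : Type*} [CommRing R]
    [IsReduced R] {n : ℕ} {u : Fin 1 ⊕ Fin n → R} {c : {q : Fin n × Fin n // q.1 < q.2} → R}
    (hu : ∀ m : Fin n, ∃ a : R, ∀ q, wedge u (Pi.single (Sum.inr m) 1) (Sum.inr q) = a * c q)
    {i j k : Fin n} (hj : j ≠ i) (hk : k ≠ i) (hjk : j ≠ k) : u (Sum.inr i) = 0 := by
  obtain ⟨α, hα⟩ := hu j
  obtain ⟨β, hβ⟩ := hu k
  have hprod : wedge u (Pi.single (Sum.inr j) 1) (Sum.inr (sortedPair hj.symm)) *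
      wedge u (Pi.single (Sum.inr k) 1) (Sum.inr (sortedPair hk.symm)) = 0 :=
    calc _ = α * c (sortedPair hj.symm) * (β * c (sortedPair hk.symm)) := by rw [hα, hβ]
      _ = α * c (sortedPair hk.symm) * (β * c (sortedPair hj.symm)) := by ring
      _ = 0 := by
        rw [← hα, wedge_single_inr_sortedPair_of_ne u hk.symm hj hjk, zero_mul]
  have hsq : u (Sum.inr i) ^ 2 = 0 := by
    rcases wedge_single_inr_sortedPair u hj.symm with h₁ | h₁ <;>
      rcases wedge_single_inr_sortedPair u hk.symm with h₂ | h₂ <;>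
      rw [h₁, h₂] at hprod <;>
      simpa only [sq, neg_mul, mul_neg, neg_neg, neg_eq_zero] using hprod
  exact IsReduced.eq_zero _ ⟨2, hsq⟩

theorem stmt7_general (p n : ℕ) [Fact p.Prime] (hn : 3 ≤ n)
    (b : Matrix (Fin 1) (Fin n) (ZMod p))
    (c : Matrix (Fin 1) {q : Fin n × Fin n // q.1 < q.2} (ZMod p))
    (A : Matrix (Fin n) (Fin n) (ZMod p))
    (f : ((Fin 1 ⊕ Fin n) → ZMod p) →ₗ[ZMod p] (WIdx n → ZMod p))
    (hf : f = (Matrix.fromBlocks b c A 0).vecMulLinear)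
    (U : Submodule (ZMod p) ((Fin 1 ⊕ Fin n) → ZMod p))
    (hU : U = Submodule.span (ZMod p)
      (Set.range fun i : Fin n => (Pi.single (Sum.inr i) 1 : (Fin 1 ⊕ Fin n) → ZMod p)))
    (u : (Fin 1 ⊕ Fin n) → ZMod p) (hu : u ∈ U)
    (hwedge : ∀ w : (Fin 1 ⊕ Fin n) → ZMod p, wedge u w ∈ LinearMap.range f) :
    u = 0 := by
  subst hf hU
  funext x
  rcases x with a | i
  · exact apply_inl_eq_zero_of_mem_span_single_inr hu a
  · obtain ⟨j, k, hj, hk, hjk⟩ := exists_pair_ne_ne_of_three_le hn i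
    exact apply_inr_eq_zero_of_forall_wedge_single_inr_eq_mul
      (fun m => exists_mul_eq_of_mem_range_vecMulLinear_fromBlocks b c A (hwedge _)) hj hk hjk

/-- Let `p` be a prime, `n ≥ 3`, `F = GF(p)`, `V = F^(n+1)` with basis
`v₀, …, v_n`, `U = span(v₁, …, v_n)` and `W = Λ²V`. Let `f : V → W` be the linear map
whose matrix with respect to these bases is the block matrix `[[b, c], [A, 0]]` with `b` a
`1 × n` row vector, `c` a nonzero `1 × C(n,2)` row vector and `A` an invertible `n × n`
matrix. If `u ∈ U` satisfies `u ∧ w ∈ f(V)` for all `w ∈ V`, then `u = 0`. -/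
theorem stmt7 (p n : ℕ) [Fact p.Prime] (hn : 3 ≤ n)
    (b : Matrix (Fin 1) (Fin n) (ZMod p))
    (c : Matrix (Fin 1) {q : Fin n × Fin n // q.1 < q.2} (ZMod p)) (hc : c ≠ 0)
    (A : Matrix (Fin n) (Fin n) (ZMod p)) (hA : IsUnit A)
    (f : ((Fin 1 ⊕ Fin n) → ZMod p) →ₗ[ZMod p] (WIdx n → ZMod p))
    (hf : f = (Matrix.fromBlocks b c A 0).vecMulLinear)
    (U : Submodule (ZMod p) ((Fin 1 ⊕ Fin n) → ZMod p))
    (hU : U = Submodule.span (ZMod p)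
      (Set.range fun i : Fin n => (Pi.single (Sum.inr i) 1 : (Fin 1 ⊕ Fin n) → ZMod p)))
    (u : (Fin 1 ⊕ Fin n) → ZMod p) (hu : u ∈ U)
    (hwedge : ∀ w : (Fin 1 ⊕ Fin n) → ZMod p, wedge u w ∈ LinearMap.range f) :
    u = 0 :=
  stmt7_general p n hn b c A f hf U hU u hu hwedge
end

section
/- Let p be a prime, n ≥ 3, F = GF(p), V = F^{n+1} with basis v₀, v₁, ..., v_n, and W = Λ²V. Let f : V → W be the linear map whose matrix, with respect to the basis v₀,...,v_n of V and the basis of W ordered as v₀∧v₁, ..., v₀∧v_n, followed by the v_i∧v_j with 1 ≤ i < j ≤ n, is the block matrix [[b, c], [A, 0]] with b a 1×n row vector, c a nonzero 1×C(n,2) row vector, and A an invertible n×n matrix. If g ∈ GL(V) satisfies f(g(v)) = (Λ²g)(f(v)) for all v ∈ V, then g maps the line span(v₀) to itself. -/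
/-!
Write `u = g v₀`. The matrix of `f` is built so that `f (x · diag(0, A⁻¹)) = v₀ ∧ x`, hence the
commutation relation gives `f (g (x · diag(0, A⁻¹))) = u ∧ g x`. On the hyperplane where the
`v₀`-coordinate of `g (x · diag(0, A⁻¹))` vanishes, the `v_i ∧ v_j` coordinates (`i, j ≥ 1`) of
`u ∧ g x` therefore vanish. If `u` had a nonzero `v_i`-coordinate with `i ≥ 1`, this would confine
the image under `g` of an `n`-dimensional space to a subspace of dimension at most `2`, which is
impossible for `n ≥ 3`. So `g v₀` is a nonzero multiple of `v₀`.
-/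

open Matrix Module

section

variable {R : Type*} [CommRing R] {n : ℕ}

lemma wedge_single_inl_eq_vecMul (x : Fin 1 ⊕ Fin n → R) :
    wedge (Pi.single (Sum.inl 0) 1) x = x ᵥ* fromBlocks 0 0 1 0 := by
  ext (j | q) <;> simp [wedge, vecMul_fromBlocks]

lemma vecMul_fromBlocks_zero_apply_inr {m : Type*} [Fintype m] (b : Matrix (Fin 1) (Fin n) R)
    (c : Matrix (Fin 1) m R) (A : Matrix (Fin n) (Fin n) R) (x : Fin 1 ⊕ Fin n → R) (q : m) :
    (x ᵥ* fromBlocks b c A 0) (Sum.inr q) = x (Sum.inl 0) * c 0 q := by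
  simp [vecMul, dotProduct]

lemma eq_smul_single_inl_of_forall_inr_eq_zero {x : Fin 1 ⊕ Fin n → R}
    (hx : ∀ j, x (Sum.inr j) = 0) : x = x (Sum.inl 0) • Pi.single (Sum.inl 0) 1 := by
  ext (i | j)
  · simp [Subsingleton.elim i 0]
  · simp [hx]

end

section

variable {F : Type*} [Field F] {n : ℕ}

/-- When `u ∉ span {v₀}`, these are the vectors whose image in `V ⧸ span {v₀}` is a multiple of
that of `u`. -/
def wedgeTailKer (u : Fin 1 ⊕ Fin n → F) : Submodule F (Fin 1 ⊕ Fin n → F) where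
  carrier := {x | ∀ q, wedge u x (Sum.inr q) = 0}
  add_mem' {x y} hx hy q := by
    simp only [Set.mem_ofPred_eq, wedge, Sum.elim_inr, Pi.add_apply] at hx hy ⊢
    linear_combination hx q + hy q
  zero_mem' q := by simp [wedge]
  smul_mem' a x hx q := by
    simp only [Set.mem_ofPred_eq, wedge, Sum.elim_inr, Pi.smul_apply, smul_eq_mul] at hx ⊢
    linear_combination a * hx q

lemma mul_apply_inr_eq_of_mem_wedgeTailKer {u x : Fin 1 ⊕ Fin n → F} (hx : x ∈ wedgeTailKer u)
    (i j : Fin n) : u (Sum.inr i) * x (Sum.inr j) = u (Sum.inr j) * x (Sum.inr i) := by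
  rcases lt_trichotomy i j with h | rfl | h
  · exact sub_eq_zero.mp (hx ⟨(i, j), h⟩)
  · rfl
  · exact (sub_eq_zero.mp (hx ⟨(j, i), h⟩)).symm

lemma finrank_wedgeTailKer_le_two {u : Fin 1 ⊕ Fin n → F} {i : Fin n} (hu : u (Sum.inr i) ≠ 0) :
    finrank F (wedgeTailKer u) ≤ 2 := by
  let φ : (Fin 1 ⊕ Fin n → F) →ₗ[F] (Fin 2 → F) :=
    LinearMap.pi ![LinearMap.proj (Sum.inl 0), LinearMap.proj (Sum.inr i)]
  have hinj : Function.Injective (φ ∘ₗ (wedgeTailKer u).subtype) := by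
    rw [← LinearMap.ker_eq_bot, Submodule.eq_bot_iff]
    rintro ⟨x, hx⟩ hφ
    have h0 : x (Sum.inl 0) = 0 := congrFun hφ 0
    have hi : x (Sum.inr i) = 0 := congrFun hφ 1
    ext (k | j)
    · simpa [Subsingleton.elim k 0] using h0
    · simpa [hi, hu] using mul_apply_inr_eq_of_mem_wedgeTailKer hx i j
  simpa using LinearMap.finrank_le_finrank_of_injective hinj

end

section

variable {F : Type*} [Field F] {n : ℕ} (b : Matrix (Fin 1) (Fin n) F)
  (c : Matrix (Fin 1) {q : Fin n × Fin n // q.1 < q.2} F) (A : Matrix (Fin n) (Fin n) F)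
  (g : (Fin 1 ⊕ Fin n → F) ≃ₗ[F] (Fin 1 ⊕ Fin n → F)) (g2 : (WIdx n → F) →ₗ[F] (WIdx n → F))

lemma apply_single_inl_apply_inr_eq_zero_of_comm (hn : 3 ≤ n) (hA : IsUnit A)
    (hg2 : ∀ x y, g2 (wedge x y) = wedge (g x) (g y))
    (hcomm : ∀ v, g v ᵥ* fromBlocks b c A 0 = g2 (v ᵥ* fromBlocks b c A 0)) (i : Fin n) :
    g (Pi.single (Sum.inl 0) 1) (Sum.inr i) = 0 := by
  by_contra hu
  let E : Matrix (Fin 1 ⊕ Fin n) (Fin 1 ⊕ Fin n) F := fromBlocks 0 0 0 A⁻¹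
  have hE : ∀ x, (x ᵥ* E) ᵥ* fromBlocks b c A 0 = wedge (Pi.single (Sum.inl 0) 1) x := by
    intro x
    rw [vecMul_vecMul, fromBlocks_multiply, wedge_single_inl_eq_vecMul]
    simp [nonsing_inv_mul A ((isUnit_iff_isUnit_det A).mp hA)]
  let δ : (Fin 1 ⊕ Fin n → F) →ₗ[F] F :=
    LinearMap.proj (Sum.inl 0) ∘ₗ g.toLinearMap ∘ₗ E.vecMulLinear
  have hker :
      (LinearMap.ker δ).map g.toLinearMap ≤ wedgeTailKer (g (Pi.single (Sum.inl 0) 1)) := by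
    rintro _ ⟨x, hx, rfl⟩ q
    rw [LinearEquiv.coe_coe, ← hg2, ← hE, ← hcomm, vecMul_fromBlocks_zero_apply_inr]
    rw [show g (x ᵥ* E) (Sum.inl 0) = 0 from hx, zero_mul]
  have hδ : n ≤ finrank F (LinearMap.ker δ) := by
    have := LinearMap.finrank_range_add_finrank_ker δ
    have := Submodule.finrank_le (LinearMap.range δ)
    simp only [finrank_self, Module.finrank_fintype_fun_eq_card, Fintype.card_sum,
      Fintype.card_fin] at *
    omega
  have := Submodule.finrank_mono hker
  rw [LinearEquiv.finrank_map_eq] at this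
  have := finrank_wedgeTailKer_le_two hu
  omega

theorem map_span_single_inl_eq_of_comm (hn : 3 ≤ n) (hA : IsUnit A)
    (hg2 : ∀ x y, g2 (wedge x y) = wedge (g x) (g y))
    (hcomm : ∀ v, g v ᵥ* fromBlocks b c A 0 = g2 (v ᵥ* fromBlocks b c A 0)) :
    (Submodule.span F {Pi.single (Sum.inl 0) 1}).map g.toLinearMap =
      Submodule.span F {Pi.single (Sum.inl 0) 1} := by
  set v₀ : Fin 1 ⊕ Fin n → F := Pi.single (Sum.inl 0) 1
  have hgv₀ : g v₀ = g v₀ (Sum.inl 0) • v₀ := eq_smul_single_inl_of_forall_inr_eq_zero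
    (apply_single_inl_apply_inr_eq_zero_of_comm b c A g g2 hn hA hg2 hcomm)
  have hne : g v₀ (Sum.inl 0) ≠ 0 := by
    intro h
    rw [h, zero_smul, LinearEquiv.map_eq_zero_iff] at hgv₀
    simp [v₀] at hgv₀
  rw [Submodule.map_span, Set.image_singleton, LinearEquiv.coe_coe, hgv₀]
  exact Submodule.span_singleton_smul_eq (IsUnit.mk0 _ hne) v₀

end

theorem stmt9_general (p n : ℕ) [Fact p.Prime] (hn : 3 ≤ n)
    (b : Matrix (Fin 1) (Fin n) (ZMod p))
    (c : Matrix (Fin 1) {q : Fin n × Fin n // q.1 < q.2} (ZMod p))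
    (A : Matrix (Fin n) (Fin n) (ZMod p)) (hA : IsUnit A)
    (f : ((Fin 1 ⊕ Fin n) → ZMod p) →ₗ[ZMod p] (WIdx n → ZMod p))
    (hf : f = (Matrix.fromBlocks b c A 0).vecMulLinear)
    (v₀ : (Fin 1 ⊕ Fin n) → ZMod p) (hv₀ : v₀ = Pi.single (Sum.inl 0) 1)
    (g : ((Fin 1 ⊕ Fin n) → ZMod p) ≃ₗ[ZMod p] ((Fin 1 ⊕ Fin n) → ZMod p))
    (g2 : (WIdx n → ZMod p) →ₗ[ZMod p] (WIdx n → ZMod p))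
    (hg2 : ∀ x y : (Fin 1 ⊕ Fin n) → ZMod p, g2 (wedge x y) = wedge (g x) (g y))
    (hcomm : ∀ v : (Fin 1 ⊕ Fin n) → ZMod p, f (g v) = g2 (f v)) :
    Submodule.map (g : ((Fin 1 ⊕ Fin n) → ZMod p) →ₗ[ZMod p] ((Fin 1 ⊕ Fin n) → ZMod p))
        (Submodule.span (ZMod p) {v₀}) =
      Submodule.span (ZMod p) {v₀} := by
  subst hf hv₀
  exact map_span_single_inl_eq_of_comm b c A g g2 hn hA hg2 hcomm

/-- Let `p` be a prime, `n ≥ 3`, `F = GF(p)`, `V = F^(n+1)` with basis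
`v₀, …, v_n` and `W = Λ²V`. Let `f : V → W` be the linear map whose matrix with respect to
these bases is the block matrix `[[b, c], [A, 0]]` with `b` a `1 × n` row vector, `c` a
nonzero `1 × C(n,2)` row vector and `A` an invertible `n × n` matrix. If `g ∈ GL(V)`
satisfies `f(g(v)) = (Λ²g)(f(v))` for all `v ∈ V` — where `Λ²g` is the (unique) linear
map on `W` with `(Λ²g)(x ∧ y) = g(x) ∧ g(y)` — then `g` maps the line `span(v₀)` to
itself. -/
theorem stmt9 (p n : ℕ) [Fact p.Prime] (hn : 3 ≤ n)
    (b : Matrix (Fin 1) (Fin n) (ZMod p))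
    (c : Matrix (Fin 1) {q : Fin n × Fin n // q.1 < q.2} (ZMod p)) (hc : c ≠ 0)
    (A : Matrix (Fin n) (Fin n) (ZMod p)) (hA : IsUnit A)
    (f : ((Fin 1 ⊕ Fin n) → ZMod p) →ₗ[ZMod p] (WIdx n → ZMod p))
    (hf : f = (Matrix.fromBlocks b c A 0).vecMulLinear)
    (v₀ : (Fin 1 ⊕ Fin n) → ZMod p) (hv₀ : v₀ = Pi.single (Sum.inl 0) 1)
    (g : ((Fin 1 ⊕ Fin n) → ZMod p) ≃ₗ[ZMod p] ((Fin 1 ⊕ Fin n) → ZMod p))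
    (g2 : (WIdx n → ZMod p) →ₗ[ZMod p] (WIdx n → ZMod p))
    (hg2 : ∀ x y : (Fin 1 ⊕ Fin n) → ZMod p, g2 (wedge x y) = wedge (g x) (g y))
    (hcomm : ∀ v : (Fin 1 ⊕ Fin n) → ZMod p, f (g v) = g2 (f v)) :
    Submodule.map (g : ((Fin 1 ⊕ Fin n) → ZMod p) →ₗ[ZMod p] ((Fin 1 ⊕ Fin n) → ZMod p))
        (Submodule.span (ZMod p) {v₀}) =
      Submodule.span (ZMod p) {v₀} :=
  stmt9_general p n hn b c A hA f hf v₀ hv₀ g g2 hg2 hcomm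
end

section
/- Let p be a prime, n ≥ 3, F = GF(p), V = F^{n+1} with basis v₀, v₁, ..., v_n, U = span(v₁, ..., v_n), and W = Λ²V. Let f : V → W be the linear map whose matrix, with respect to the basis v₀,...,v_n of V and the basis of W ordered as v₀∧v₁, ..., v₀∧v_n, followed by the v_i∧v_j with 1 ≤ i < j ≤ n, is the block matrix [[b, c], [A, 0]] with b a 1×n row vector, c a nonzero 1×C(n,2) row vector, and A an invertible n×n matrix. If g ∈ GL(V) satisfies f(g(v)) = (Λ²g)(f(v)) for all v ∈ V, then g maps the subspace U to itself. -/
/-!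
Let `a = g v₀` and let `δ x` be the `v₀`-coordinate of `g x`. For `x ∈ U` we have
`f x = v₀ ∧ y` with `y ∈ U` (the image of `x` under `A`), so equivariance gives
`f (g x) = a ∧ g y`. On the `U ∧ U` block this reads `δ x • c = (a ∧ g y)|_{U∧U}`; hence if
`δ` does not vanish on `U`, the `U`-part `a'` of `a` is nonzero. On `U ∩ ker δ`, which has
dimension at least `n - 1 ≥ 2`, the `U ∧ U` block then forces the `U`-part of `g y` onto the
line `F a'`, and the `v₀ ∧ U` block puts `(U-part of g x) A` on that line too. But
`x ↦ (U-part of g x) A` is injective on `U ∩ ker δ`, so that subspace has dimension at most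
one, a contradiction. Thus `g U ⊆ U`, and equality follows by dimension.
-/

open Module Submodule Matrix

theorem mem_span_singleton_of_mul_eq_mul {K ι : Type*} [Field K] {a w : ι → K} (ha : a ≠ 0)
    (h : ∀ i j, a i * w j = a j * w i) : w ∈ K ∙ a := by
  obtain ⟨i, hi⟩ := Function.ne_iff.mp ha
  refine mem_span_singleton.mpr ⟨w i / a i, funext fun j => ?_⟩
  simp only [Pi.smul_apply, Pi.zero_apply, smul_eq_mul] at hi ⊢
  field_simp
  linear_combination (h i j).symm

theorem Submodule.finrank_le_finrank_inf_ker_add_one {K V : Type*} [Field K] [AddCommGroup V]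
    [Module K V] [FiniteDimensional K V] (S : Submodule K V) (δ : V →ₗ[K] K) :
    finrank K S ≤ finrank K ↥(S ⊓ LinearMap.ker δ) + 1 := by
  have hsup := Submodule.finrank_sup_add_finrank_inf_eq S (LinearMap.ker δ)
  have hrank := LinearMap.finrank_range_add_finrank_ker δ
  have hle := Submodule.finrank_le (S ⊔ LinearMap.ker δ)
  have hrange : finrank K (LinearMap.range δ) ≤ 1 :=
    (Submodule.finrank_le _).trans (finrank_self K).le
  omega

theorem Submodule.finrank_le_of_disjoint_ker_of_map_le {K V W : Type*} [Field K]
    [AddCommGroup V] [Module K V] [AddCommGroup W] [Module K W] [FiniteDimensional K W]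
    {S : Submodule K V} {T : Submodule K W} (Φ : V →ₗ[K] W)
    (hS : Disjoint S (LinearMap.ker Φ)) (hST : S.map Φ ≤ T) :
    finrank K S ≤ finrank K T := by
  have hinj : Function.Injective (Φ.domRestrict S) := by
    rw [← LinearMap.ker_eq_bot, LinearMap.ker_domRestrict]
    exact Submodule.disjoint_iff_comap_eq_bot.mp hS
  rw [← LinearMap.finrank_range_of_inj hinj]
  refine Submodule.finrank_mono ?_
  rwa [LinearMap.range_domRestrict]

section Coordinates

variable {K : Type*} [Field K]

theorem span_range_single_inr_eq_ker_proj_inl {ι : Type*} [Fintype ι] [DecidableEq ι] :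
    span K (Set.range fun i : ι => (Pi.single (Sum.inr i) 1 : Fin 1 ⊕ ι → K)) =
      LinearMap.ker (LinearMap.proj (Sum.inl 0)) := by
  refine le_antisymm (span_le.mpr <| Set.range_subset_iff.mpr fun i => by simp) fun x hx => ?_
  have hx0 : x (Sum.inl 0) = 0 := hx
  have hsum : x = ∑ i : ι, x (Sum.inr i) • (Pi.single (Sum.inr i) 1 : Fin 1 ⊕ ι → K) := by
    ext (k | k)
    · simp [Subsingleton.elim k 0, hx0]
    · simp [Pi.single_apply]
  rw [hsum]
  exact sum_mem fun i _ => smul_mem _ _ (subset_span ⟨i, rfl⟩)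

theorem finrank_ker_proj_inl {ι : Type*} [Fintype ι] [DecidableEq ι] :
    finrank K (LinearMap.ker (LinearMap.proj (Sum.inl 0) : (Fin 1 ⊕ ι → K) →ₗ[K] K)) =
      Fintype.card ι := by
  rw [← span_range_single_inr_eq_ker_proj_inl, finrank_span_eq_card]
  exact (Pi.linearIndependent_single_one _ K).comp Sum.inr Sum.inr_injective

variable {n : ℕ}

theorem wedge_single_inl_left (y : Fin 1 ⊕ Fin n → K) :
    wedge (Pi.single (Sum.inl 0) 1) y = Sum.elim (y ∘ Sum.inr) 0 := by
  ext (j | q) <;> simp [wedge]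

theorem mul_eq_mul_of_wedge_inr_eq_zero {x y : Fin 1 ⊕ Fin n → K}
    (h : ∀ q, wedge x y (Sum.inr q) = 0) (i j : Fin n) :
    x (Sum.inr i) * y (Sum.inr j) = x (Sum.inr j) * y (Sum.inr i) := by
  rcases lt_trichotomy i j with hij | rfl | hij
  · exact sub_eq_zero.mp (h ⟨(i, j), hij⟩)
  · rfl
  · exact (sub_eq_zero.mp (h ⟨(j, i), hij⟩)).symm

theorem vecMul_fromBlocks_zero {σ : Type*} [Fintype σ] (b : Matrix (Fin 1) (Fin n) K)
    (c : Matrix (Fin 1) σ K) (A : Matrix (Fin n) (Fin n) K) (x : Fin 1 ⊕ Fin n → K) :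
    x ᵥ* fromBlocks b c A 0 =
      Sum.elim (x (Sum.inl 0) • b 0 + (x ∘ Sum.inr) ᵥ* A) (x (Sum.inl 0) • c 0) := by
  rw [vecMul_fromBlocks]
  ext (j | q) <;> simp [vecMul, dotProduct]

end Coordinates

section Equivariance

variable {K : Type*} [Field K] {n : ℕ} {b : Matrix (Fin 1) (Fin n) K}
  {c : Matrix (Fin 1) {q : Fin n × Fin n // q.1 < q.2} K} {A : Matrix (Fin n) (Fin n) K}
  {g : (Fin 1 ⊕ Fin n → K) ≃ₗ[K] (Fin 1 ⊕ Fin n → K)} {g2 : (WIdx n → K) →ₗ[K] (WIdx n → K)}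
  (hg2 : ∀ x y, g2 (wedge x y) = wedge (g x) (g y))
  (hcomm : ∀ v, g v ᵥ* fromBlocks b c A 0 = g2 (v ᵥ* fromBlocks b c A 0))
include hg2 hcomm

theorem vecMul_fromBlocks_eq_wedge_of_apply_inl_eq_zero {x : Fin 1 ⊕ Fin n → K}
    (hx : x (Sum.inl 0) = 0) :
    g x ᵥ* fromBlocks b c A 0 =
      wedge (g (Pi.single (Sum.inl 0) 1)) (g (Sum.elim 0 ((x ∘ Sum.inr) ᵥ* A))) := by
  rw [hcomm, ← hg2, wedge_single_inl_left, vecMul_fromBlocks_zero, hx]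
  simp

theorem comp_inr_ne_zero_of_apply_inl_ne_zero (hc : c ≠ 0) {x : Fin 1 ⊕ Fin n → K}
    (hx : x (Sum.inl 0) = 0) (hgx : g x (Sum.inl 0) ≠ 0) :
    g (Pi.single (Sum.inl 0) 1) ∘ Sum.inr ≠ 0 := by
  intro ha
  refine hc (funext fun i => funext fun q => ?_)
  have hq := congr_fun (vecMul_fromBlocks_eq_wedge_of_apply_inl_eq_zero hg2 hcomm hx) (Sum.inr q)
  simp only [vecMul_fromBlocks_zero, Sum.elim_inr, Pi.smul_apply, smul_eq_mul, wedge] at hq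
  simp only [funext_iff, Function.comp_apply, Pi.zero_apply] at ha
  rw [ha, ha, zero_mul, zero_mul, sub_zero, mul_eq_zero] at hq
  simpa [Subsingleton.elim i 0] using hq.resolve_left hgx

theorem vecMul_comp_inr_mem_span_singleton (ha : g (Pi.single (Sum.inl 0) 1) ∘ Sum.inr ≠ 0)
    {x : Fin 1 ⊕ Fin n → K} (hx : x (Sum.inl 0) = 0) (hgx : g x (Sum.inl 0) = 0) :
    (g x ∘ Sum.inr) ᵥ* A ∈ K ∙ (g (Pi.single (Sum.inl 0) 1) ∘ Sum.inr) := by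
  set a := g (Pi.single (Sum.inl 0) 1)
  set y := g (Sum.elim 0 ((x ∘ Sum.inr) ᵥ* A))
  have hxy := vecMul_fromBlocks_eq_wedge_of_apply_inl_eq_zero hg2 hcomm hx
  rw [vecMul_fromBlocks_zero, hgx, zero_smul, zero_smul, zero_add] at hxy
  have hy : y ∘ Sum.inr ∈ K ∙ (a ∘ Sum.inr) :=
    mem_span_singleton_of_mul_eq_mul ha <| mul_eq_mul_of_wedge_inr_eq_zero fun q =>
      (congr_fun hxy (Sum.inr q)).symm
  have hgxA : (g x ∘ Sum.inr) ᵥ* A =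
      a (Sum.inl 0) • (y ∘ Sum.inr) - y (Sum.inl 0) • (a ∘ Sum.inr) := by
    ext j
    have hj := congr_fun hxy (Sum.inl j)
    simp only [Sum.elim_inl, wedge] at hj
    simp only [Pi.sub_apply, Pi.smul_apply, Function.comp_apply, smul_eq_mul]
    linear_combination hj
  rw [hgxA]
  exact sub_mem (smul_mem _ _ hy) (smul_mem _ _ (mem_span_singleton_self _))

theorem map_ker_proj_inl_le (hn : 3 ≤ n) (hc : c ≠ 0) (hA : IsUnit A) :
    (LinearMap.ker (LinearMap.proj (Sum.inl 0) : (Fin 1 ⊕ Fin n → K) →ₗ[K] K)).map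
      (g : (Fin 1 ⊕ Fin n → K) →ₗ[K] (Fin 1 ⊕ Fin n → K)) ≤
        LinearMap.ker (LinearMap.proj (Sum.inl 0)) := by
  set π : (Fin 1 ⊕ Fin n → K) →ₗ[K] K := LinearMap.proj (Sum.inl 0)
  set U := LinearMap.ker π
  set δ := π ∘ₗ (g : (Fin 1 ⊕ Fin n → K) →ₗ[K] (Fin 1 ⊕ Fin n → K))
  suffices hδ : U ≤ LinearMap.ker δ by
    rintro _ ⟨x, hx, rfl⟩
    exact hδ hx
  intro x₁ hx₁
  by_contra hgx₁
  have ha := comp_inr_ne_zero_of_apply_inl_ne_zero hg2 hcomm hc hx₁ hgx₁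
  set Φ := A.vecMulLinear ∘ₗ LinearMap.funLeft K K Sum.inr ∘ₗ
    (g : (Fin 1 ⊕ Fin n → K) →ₗ[K] (Fin 1 ⊕ Fin n → K))
  have hdisj : Disjoint (U ⊓ LinearMap.ker δ) (LinearMap.ker Φ) := by
    refine disjoint_def.mpr fun x ⟨_, hδx⟩ hΦx => g.map_eq_zero_iff.mp ?_
    have hinr : g x ∘ Sum.inr = 0 := vecMul_injective_of_isUnit hA
      ((LinearMap.mem_ker.mp hΦx).trans (zero_vecMul A).symm)
    ext (i | i)
    · simpa [Subsingleton.elim i 0, δ, π] using hδx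
    · exact congr_fun hinr i
  have hmap : (U ⊓ LinearMap.ker δ).map Φ ≤ K ∙ (g (Pi.single (Sum.inl 0) 1) ∘ Sum.inr) := by
    rintro _ ⟨x, ⟨hx, hδx⟩, rfl⟩
    exact vecMul_comp_inr_mem_span_singleton hg2 hcomm ha hx hδx
  have hle := finrank_le_of_disjoint_ker_of_map_le Φ hdisj hmap
  rw [finrank_span_singleton ha] at hle
  have hge := U.finrank_le_finrank_inf_ker_add_one δ
  have hU : finrank K U = n := by simpa using finrank_ker_proj_inl (K := K) (ι := Fin n)
  omega

end Equivariance

/-- Let `p` be a prime, `n ≥ 3`, `F = GF(p)`, `V = F^(n+1)` with basis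
`v₀, …, v_n`, `U = span(v₁, …, v_n)` and `W = Λ²V`. Let `f : V → W` be the linear map
whose matrix with respect to these bases is the block matrix `[[b, c], [A, 0]]` with `b` a
`1 × n` row vector, `c` a nonzero `1 × C(n,2)` row vector and `A` an invertible `n × n`
matrix. If `g ∈ GL(V)` satisfies `f(g(v)) = (Λ²g)(f(v))` for all `v ∈ V` — where `Λ²g` is
the (unique) linear map on `W` with `(Λ²g)(x ∧ y) = g(x) ∧ g(y)` — then `g` maps the
subspace `U` to itself. -/
theorem stmt11 (p n : ℕ) [Fact p.Prime] (hn : 3 ≤ n)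
    (b : Matrix (Fin 1) (Fin n) (ZMod p))
    (c : Matrix (Fin 1) {q : Fin n × Fin n // q.1 < q.2} (ZMod p)) (hc : c ≠ 0)
    (A : Matrix (Fin n) (Fin n) (ZMod p)) (hA : IsUnit A)
    (f : ((Fin 1 ⊕ Fin n) → ZMod p) →ₗ[ZMod p] (WIdx n → ZMod p))
    (hf : f = (Matrix.fromBlocks b c A 0).vecMulLinear)
    (U : Submodule (ZMod p) ((Fin 1 ⊕ Fin n) → ZMod p))
    (hU : U = Submodule.span (ZMod p)
      (Set.range fun i : Fin n => (Pi.single (Sum.inr i) 1 : (Fin 1 ⊕ Fin n) → ZMod p)))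
    (g : ((Fin 1 ⊕ Fin n) → ZMod p) ≃ₗ[ZMod p] ((Fin 1 ⊕ Fin n) → ZMod p))
    (g2 : (WIdx n → ZMod p) →ₗ[ZMod p] (WIdx n → ZMod p))
    (hg2 : ∀ x y : (Fin 1 ⊕ Fin n) → ZMod p, g2 (wedge x y) = wedge (g x) (g y))
    (hcomm : ∀ v : (Fin 1 ⊕ Fin n) → ZMod p, f (g v) = g2 (f v)) :
    Submodule.map (g : ((Fin 1 ⊕ Fin n) → ZMod p) →ₗ[ZMod p] ((Fin 1 ⊕ Fin n) → ZMod p))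
        U = U := by
  subst hf hU
  rw [span_range_single_inr_eq_ker_proj_inl]
  exact eq_of_le_of_finrank_le (map_ker_proj_inl_le hg2 hcomm hn hc hA)
    (LinearEquiv.finrank_map_eq g _).ge
end

section
/- Let p be a prime, n ≥ 3, F = GF(p), V = F^{n+1} with basis v₀, v₁, ..., v_n, and W = Λ²V. Let α be a primitive element of GF(p^n), m its minimal polynomial over F, and A the n×n companion matrix of m. Let f : V → W be the linear map whose matrix, with respect to the basis v₀,...,v_n of V and the basis of W ordered as v₀∧v₁, ..., v₀∧v_n, followed by the v_i∧v_j with 1 ≤ i < j ≤ n, is the block matrix [[b, c], [A, 0]] with b a nonzero 1×n row vector and c a nonzero 1×C(n,2) row vector. Then the group G = {g ∈ GL(V) : f(g(v)) = (Λ²g)(f(v)) for all v ∈ V} is trivial: its only element is the identity. -/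
/-!
Split `V = F v₀ ⊕ Fⁿ` and write `g` in block form. Comparing `f ∘ g` with `Λ²g ∘ f` on `Fⁿ`
shows that `g` preserves both summands, since otherwise it would squeeze an `n`-dimensional
subspace into a plane; so `g = a ⊕ B` with `B A = a • A B` and `b B = b`. Then `a • A` is conjugate
to `A`, so `a α` is a root of the minimal polynomial of `α`, i.e. `a α = α ^ p ^ k`, and
primitivity of `α` forces `a = 1`. Finally `B` commutes with `A`, whose characteristic polynomial
is irreducible, and fixes `b ≠ 0`; hence it fixes the `A`-cyclic span of `b`, which is all of `Fⁿ`.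
-/

open Polynomial Matrix Module

lemma pow_sub_one_mul_sub_one_lt {q k n : ℕ} (hq : 1 < q) (hk : k < n) :
    (q ^ k - 1) * (q - 1) < q ^ n - 1 := by
  have h₁ : q ^ (k + 1) ≤ q ^ n := Nat.pow_le_pow_right (by omega) hk
  have h₂ : 1 ≤ q ^ k := Nat.one_le_pow _ _ (by omega)
  zify [h₂, hq.le, h₂.trans (Nat.pow_le_pow_right (by omega) hk.le : q ^ k ≤ q ^ n)]
  push_cast [pow_succ] at h₁
  nlinarith

section FiniteField

variable {K L : Type*} [Field K] [Fintype K] [Field L] [Finite L] [Algebra K L]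

/-- `a • α` is a Galois conjugate `α ^ q ^ k`, so `α ^ (q ^ k - 1) = a` lies in `Kˣ` and the
order `q ^ N - 1` of `α` divides `(q ^ k - 1) * (q - 1)`, which is too small unless `k = 0`. -/
lemma eq_one_of_aeval_smul_minpoly_eq_zero {α : L} (hα : orderOf α = Nat.card L - 1) {a : K}
    (h : aeval (a • α) (minpoly K α) = 0) : a = 1 := by
  have hq : 1 < Fintype.card K := Fintype.one_lt_card
  have hL : Nat.card L = Fintype.card K ^ finrank K L := by
    rw [Module.natCard_eq_pow_finrank (K := K), Nat.card_eq_fintype_card]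
  have hα₀ : α ≠ 0 := by
    rintro rfl
    have : 1 < Nat.card L := Finite.one_lt_card
    simp at hα
    omega
  obtain ⟨σ, hσ⟩ := minpoly.exists_algEquiv_of_root' (Algebra.IsAlgebraic.isAlgebraic α) h
  obtain ⟨⟨k, hk⟩, rfl⟩ := (FiniteField.bijective_frobeniusAlgEquivOfAlgebraic_pow K L).2 σ
  simp only [AlgEquiv.coe_pow, FiniteField.coe_frobeniusAlgEquivOfAlgebraic_iterate] at hσ
  rw [Algebra.smul_def] at hσ
  obtain rfl | hk₀ := k.eq_zero_or_pos
  · rw [pow_zero, pow_one] at hσ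
    have h₁ : (algebraMap K L a - 1) * α = 0 := by linear_combination -hσ
    exact (algebraMap K L).injective <| by
      simpa [sub_eq_zero] using (mul_eq_zero.1 h₁).resolve_right hα₀
  have ha : a ≠ 0 := by
    rintro rfl
    simp only [map_zero, zero_mul, pow_eq_zero_iff', ne_eq] at hσ
    exact hα₀ hσ.1
  have h₁ : α ^ (Fintype.card K ^ k - 1) = algebraMap K L a := by
    refine mul_right_cancel₀ hα₀ ?_
    rw [← pow_succ, Nat.sub_add_cancel (Nat.one_le_pow _ _ (by omega)), hσ]
  have h₂ : α ^ ((Fintype.card K ^ k - 1) * (Fintype.card K - 1)) = 1 := by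
    rw [pow_mul, h₁, ← map_pow, FiniteField.pow_card_sub_one_eq_one a ha, map_one]
  have h₃ := orderOf_dvd_of_pow_eq_one h₂
  rw [hα, hL] at h₃
  have h₄ : 0 < (Fintype.card K ^ k - 1) * (Fintype.card K - 1) :=
    Nat.mul_pos (Nat.sub_pos_of_lt (Nat.one_lt_pow hk₀.ne' hq)) (by omega)
  exact absurd (Nat.le_of_dvd h₄ h₃) (pow_sub_one_mul_sub_one_lt hq hk).not_ge

end FiniteField

lemma aeval_smul_minpoly_eq_zero {K R L : Type*} [Field K] [Ring R] [Algebra K R] [Ring L]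
    [Algebra K L] {x : R} {α : L} (hxα : minpoly K x = minpoly K α) {a : K}
    (h : aeval (a • x) (minpoly K x) = 0) : aeval (a • α) (minpoly K α) = 0 := by
  have hR : ∀ p : K[X], aeval (a • x) p = aeval x (p.comp (C a * X)) := fun p => by
    simp [aeval_comp, Algebra.smul_def]
  have hL : ∀ p : K[X], aeval (a • α) p = aeval α (p.comp (C a * X)) := fun p => by
    simp [aeval_comp, Algebra.smul_def]
  rw [hL, ← minpoly.dvd_iff, ← hxα, minpoly.dvd_iff, ← hR]
  exact h

section Matrix

variable {K : Type*} [Field K] {n : ℕ} {A B : Matrix (Fin n) (Fin n) K}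

lemma isUnit_of_irreducible_charpoly (hn : 2 ≤ n) (hA : Irreducible A.charpoly) : IsUnit A := by
  rw [isUnit_iff_isUnit_det, det_eq_sign_charpoly_coeff, isUnit_iff_ne_zero]
  refine mul_ne_zero (by simp) fun h₀ => ?_
  have hX := irreducible_X.dvd_symm hA (X_dvd_iff.2 h₀)
  have := natDegree_le_of_dvd hX X_ne_zero
  rw [charpoly_natDegree_eq_dim, Fintype.card_fin, natDegree_X] at this
  omega

lemma minpoly_eq_charpoly_of_irreducible (hA : Irreducible A.charpoly) :
    minpoly K A = A.charpoly := by
  rcases n with _ | n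
  · exact absurd ((charpoly_isEmpty (A := A)) ▸ hA) not_irreducible_one
  · exact (minpoly.eq_of_irreducible_of_monic hA (aeval_self_charpoly A) (charpoly_monic A)).symm

lemma charpoly_smul_eq_of_mul_eq {a : K} (hB : IsUnit B) (h : B * A = a • (A * B)) :
    (a • A).charpoly = A.charpoly := by
  have hdet := (isUnit_iff_isUnit_det B).1 hB
  rw [← charpoly_units_conj hB.unit A, IsUnit.unit_spec, h, smul_mul, mul_assoc,
    mul_nonsing_inv _ hdet, mul_one]

lemma vecMul_aeval_mem {S : Submodule K (Fin n → K)} (hS : ∀ x ∈ S, x ᵥ* A ∈ S)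
    {x : Fin n → K} (hx : x ∈ S) (q : K[X]) : x ᵥ* aeval A q ∈ S := by
  have hpow : ∀ k, x ᵥ* A ^ k ∈ S := by
    intro k
    induction k with
    | zero => simpa using hx
    | succ k ih => simpa [pow_succ, ← vecMul_vecMul] using hS _ ih
  induction q using Polynomial.induction_on' with
  | add q r hq hr => simpa [vecMul_add] using S.add_mem hq hr
  | monomial k t =>
    simpa [aeval_monomial, ← Algebra.smul_def, vecMul_smul] using S.smul_mem t (hpow k)

/-- A nonzero polynomial `q` of degree `< n` is coprime to the irreducible `A.charpoly`, so
`aeval A q` is invertible; hence `q ↦ v ᵥ* aeval A q` embeds `K[X]_{<n}` into `S`. -/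
lemma eq_top_of_vecMul_mem (hA : Irreducible A.charpoly) {S : Submodule K (Fin n → K)}
    (hS : ∀ x ∈ S, x ᵥ* A ∈ S) {v : Fin n → K} (hv : v ∈ S) (hv₀ : v ≠ 0) : S = ⊤ := by
  let P : degreeLT K n →ₗ[K] Fin n → K :=
    { toFun q := v ᵥ* aeval A q.1
      map_add' q r := by simp [vecMul_add]
      map_smul' t q := by simp [vecMul_smul] }
  have hP : Function.Injective P := by
    refine (injective_iff_map_eq_zero P).2 fun ⟨q, hq⟩ hPq => ?_
    change v ᵥ* aeval A q = 0 at hPq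
    by_contra hq₀
    have hq₀' : q ≠ 0 := fun h => hq₀ (Subtype.ext h)
    have hdeg : q.natDegree < A.charpoly.natDegree := by
      rw [charpoly_natDegree_eq_dim, Fintype.card_fin]
      exact (natDegree_lt_iff_degree_lt hq₀').2 (mem_degreeLT.1 hq)
    obtain ⟨r, s, hrs⟩ :=
      hA.coprime_iff_not_dvd.2 fun h => (natDegree_le_of_dvd h hq₀').not_gt hdeg
    have hqs : aeval A q * aeval A s = 1 := by
      simpa [aeval_self_charpoly] using congrArg (aeval A) (show q * s + r * A.charpoly = 1 by
        linear_combination hrs)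
    have := congrArg (· ᵥ* aeval A s) hPq
    simp only [vecMul_vecMul, hqs, vecMul_one, zero_vecMul] at this
    exact hv₀ this
  have hrange : LinearMap.range P ≤ S := by
    rintro _ ⟨q, rfl⟩
    exact vecMul_aeval_mem hS hv q.1
  refine Submodule.eq_top_of_finrank_eq (le_antisymm (Submodule.finrank_le S) ?_)
  calc finrank K (Fin n → K) = finrank K (degreeLT K n) := by
        rw [(degreeLTEquiv K n).finrank_eq]
    _ = finrank K (LinearMap.range P) := (LinearMap.finrank_range_of_inj hP).symm
    _ ≤ finrank K S := Submodule.finrank_mono hrange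

lemma eq_one_of_commute_of_vecMul_eq (hA : Irreducible A.charpoly) (hAB : Commute A B)
    {v : Fin n → K} (hv : v ᵥ* B = v) (hv₀ : v ≠ 0) : B = 1 := by
  let S := LinearMap.ker (B.vecMulLinear - LinearMap.id)
  have hmem : ∀ x, x ∈ S ↔ x ᵥ* B = x := fun x => by simp [S, sub_eq_zero]
  have hS : S = ⊤ := eq_top_of_vecMul_mem hA (fun x hx => by
      rw [hmem, vecMul_vecMul, hAB.eq, ← vecMul_vecMul, (hmem x).1 hx]) ((hmem v).2 hv) hv₀
  exact ext_iff_vecMul.2 fun x => by simpa using (hmem x).1 (hS ▸ Submodule.mem_top)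

end Matrix

section Coordinates

variable (K : Type*) [CommRing K] (n : ℕ)

/-- `V = F v₀ ⊕ Fⁿ`, where `ι` identifies `Fⁿ` with the span of `v₁, …, v_n`. -/
def v₀ : (Fin 1 ⊕ Fin n) → K := Sum.elim 1 0

def ι : (Fin n → K) →ₗ[K] (Fin 1 ⊕ Fin n) → K where
  toFun x := Sum.elim 0 x
  map_add' x y := by ext (_ | _) <;> simp
  map_smul' t x := by ext (_ | _) <;> simp

variable {K n}

/-- The coordinates of `x ∧ y` in `Λ²Fⁿ`, the span of the `vᵢ ∧ vⱼ` with `1 ≤ i < j`. -/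
def wedgeTail (x y : Fin n → K) : {q : Fin n × Fin n // q.1 < q.2} → K :=
  fun q => x q.1.1 * y q.1.2 - x q.1.2 * y q.1.1

@[simp]
lemma wedgeTail_zero_left (y : Fin n → K) : wedgeTail 0 y = 0 := by
  ext; simp [wedgeTail]

lemma eq_smul_v₀_add_ι (v : (Fin 1 ⊕ Fin n) → K) :
    v = v (Sum.inl 0) • v₀ K n + ι K n (v ∘ Sum.inr) := by
  ext (i | _)
  · simp [v₀, ι, Subsingleton.elim i 0]
  · simp [v₀, ι]

lemma ι_injective : Function.Injective (ι K n) :=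
  fun _ _ h => funext fun j => congrFun h (Sum.inr j)

lemma eq_zero_of_smul_v₀_add_ι_eq_zero {s : K} {x : Fin n → K}
    (h : s • v₀ K n + ι K n x = 0) : s = 0 ∧ x = 0 :=
  ⟨by simpa [v₀, ι] using congrFun h (Sum.inl 0),
    funext fun j => by simpa [v₀, ι] using congrFun h (Sum.inr j)⟩

lemma wedge_smul_v₀_add_ι (s t : K) (x y : Fin n → K) :
    wedge (s • v₀ K n + ι K n x) (t • v₀ K n + ι K n y) =
      Sum.elim (s • y - t • x) (wedgeTail x y) := by
  ext (_ | _) <;> simp [wedge, wedgeTail, v₀, ι]; ring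

lemma wedge_ι_ι (x y : Fin n → K) :
    wedge (ι K n x) (ι K n y) = Sum.elim (0 : Fin n → K) (wedgeTail x y) := by
  simpa using wedge_smul_v₀_add_ι (0 : K) 0 x y

lemma wedgeTail_single_one (q : {q : Fin n × Fin n // q.1 < q.2}) :
    wedgeTail (Pi.single q.1.1 1) (Pi.single q.1.2 1) =
      (Pi.single q 1 : {q : Fin n × Fin n // q.1 < q.2} → K) := by
  ext r
  obtain ⟨⟨i, j⟩, hij⟩ := q
  obtain ⟨⟨k, l⟩, hkl⟩ := r
  simp only [wedgeTail, Pi.single_apply, Subtype.mk.injEq, Prod.mk.injEq]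
  by_cases hki : k = i <;> by_cases hlj : l = j <;> by_cases hli : l = i <;> simp_all
  all_goals omega

lemma sum_elim_zero_eq_sum_wedge (z : {q : Fin n × Fin n // q.1 < q.2} → K) :
    (Sum.elim 0 z : WIdx n → K) =
      ∑ q, z q • wedge (ι K n (Pi.single q.1.1 1)) (ι K n (Pi.single q.1.2 1)) := by
  simp_rw [wedge_ι_ι, wedgeTail_single_one]
  ext (_ | r)
  · simp
  · simp [Finset.sum_apply, Pi.single_apply]

lemma vecMul_fromBlocks_smul_v₀_add_ι {κ : Type*} (b : Matrix (Fin 1) (Fin n) K)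
    (c : Matrix (Fin 1) κ K) (A : Matrix (Fin n) (Fin n) K) (s : K) (x : Fin n → K) :
    (s • v₀ K n + ι K n x) ᵥ* fromBlocks b c A 0 = Sum.elim (s • b 0 + x ᵥ* A) (s • c 0) := by
  rw [vecMul_fromBlocks]
  ext (_ | _) <;> simp [v₀, ι, Function.comp_def, vecMul, dotProduct]

lemma exists_blockForm (g : ((Fin 1 ⊕ Fin n) → K) →ₗ[K] (Fin 1 ⊕ Fin n) → K) :
    ∃ (a : K) (u w : Fin n → K) (B : Matrix (Fin n) (Fin n) K),
      g (v₀ K n) = a • v₀ K n + ι K n u ∧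
        ∀ y, g (ι K n y) = (y ⬝ᵥ w) • v₀ K n + ι K n (y ᵥ* B) := by
  classical
  refine ⟨_, _, fun i => g (ι K n (Pi.single i 1)) (Sum.inl 0),
    Matrix.of fun i j => g (ι K n (Pi.single i 1)) (Sum.inr j), eq_smul_v₀_add_ι _, fun y => ?_⟩
  have hy : g (ι K n y) = ∑ i, y i • g (ι K n (Pi.single i 1)) := by
    conv_lhs => rw [pi_eq_sum_univ' y]
    simp
  rw [eq_smul_v₀_add_ι (g (ι K n y)), hy]
  congr 2
  · simp [dotProduct, Finset.sum_apply]
  · ext j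
    simp [vecMul, dotProduct, Finset.sum_apply]

end Coordinates

lemma mem_span_singleton_of_wedgeTail_eq_zero {K : Type*} [Field K] {n : ℕ} {u z : Fin n → K}
    (hu : u ≠ 0) (h : wedgeTail u z = 0) : z ∈ K ∙ u := by
  obtain ⟨j, hj⟩ := Function.ne_iff.1 hu
  refine Submodule.mem_span_singleton.2 ⟨z j / u j, funext fun k => ?_⟩
  have hjk : u j * z k = u k * z j := by
    rcases lt_trichotomy j k with hlt | rfl | hlt
    · simpa [wedgeTail, sub_eq_zero] using congrFun h ⟨(j, k), hlt⟩
    · rfl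
    · simpa [wedgeTail, sub_eq_zero, eq_comm] using congrFun h ⟨(k, j), hlt⟩
  have hj' : u j ≠ 0 := hj
  rw [Pi.smul_apply, smul_eq_mul, div_mul_eq_mul_div, div_eq_iff hj']
  linear_combination -hjk

lemma le_finrank_of_injective_of_mapsTo {K : Type*} [Field K] {n : ℕ}
    {g : ((Fin 1 ⊕ Fin n) → K) →ₗ[K] (Fin 1 ⊕ Fin n) → K} (hg : Function.Injective g)
    (T : Submodule K ((Fin 1 ⊕ Fin n) → K)) (φ : (Fin n → K) →ₗ[K] K) (hv₀ : g (v₀ K n) ∈ T)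
    (hι : ∀ y ∈ LinearMap.ker φ, g (ι K n y) ∈ T) : n ≤ finrank K T := by
  let Θ : (K × LinearMap.ker φ) →ₗ[K] T :=
    LinearMap.codRestrict T
      (g ∘ₗ ((LinearMap.toSpanSingleton K _ (v₀ K n)).coprod
        (ι K n ∘ₗ (LinearMap.ker φ).subtype)))
      (fun p => by simpa using T.add_mem (T.smul_mem p.1 hv₀) (hι _ p.2.2))
  have hΘ : Function.Injective Θ := by
    refine (injective_iff_map_eq_zero Θ).2 fun p hp => ?_
    have h := eq_zero_of_smul_v₀_add_ι_eq_zero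
      (hg ((congrArg Subtype.val hp).trans g.map_zero.symm))
    exact Prod.ext h.1 (Subtype.ext h.2)
  have hker := LinearMap.finrank_range_add_finrank_ker φ
  have hrange : finrank K (LinearMap.range φ) ≤ 1 :=
    (Submodule.finrank_le _).trans (finrank_self K).le
  have := LinearMap.finrank_le_finrank_of_injective hΘ
  rw [finrank_prod, finrank_self, finrank_fin_fun] at *
  omega

section Relations

variable {K : Type*} [CommRing K] {n : ℕ} {A : Matrix (Fin n) (Fin n) K}
  {b : Matrix (Fin 1) (Fin n) K} {c : Matrix (Fin 1) {q : Fin n × Fin n // q.1 < q.2} K}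
  {g : ((Fin 1 ⊕ Fin n) → K) →ₗ[K] (Fin 1 ⊕ Fin n) → K} {g2 : (WIdx n → K) →ₗ[K] WIdx n → K}
  {a : K} {u w : Fin n → K} {B : Matrix (Fin n) (Fin n) K}

/-- `f (ι x) = v₀ ∧ ι (x ᵥ* A)`, so `Λ²g (f (ι x)) = g v₀ ∧ g (ι (x ᵥ* A))`. -/
lemma blockForm_relations (hg2 : ∀ x y, g2 (wedge x y) = wedge (g x) (g y))
    (hcomm : ∀ v, (fromBlocks b c A 0).vecMulLinear (g v) =
      g2 ((fromBlocks b c A 0).vecMulLinear v))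
    (hv₀ : g (v₀ K n) = a • v₀ K n + ι K n u)
    (hι : ∀ y, g (ι K n y) = (y ⬝ᵥ w) • v₀ K n + ι K n (y ᵥ* B)) (x : Fin n → K) :
    (x ⬝ᵥ w) • b 0 + x ᵥ* B ᵥ* A = a • (x ᵥ* A ᵥ* B) - (x ᵥ* A ⬝ᵥ w) • u ∧
      (x ⬝ᵥ w) • c 0 = wedgeTail u (x ᵥ* A ᵥ* B) := by
  have h := hcomm (ι K n x)
  have hx : ι K n x ᵥ* fromBlocks b c A 0 = wedge (v₀ K n) (ι K n (x ᵥ* A)) := by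
    have h₁ := vecMul_fromBlocks_smul_v₀_add_ι b c A 0 x
    have h₂ := wedge_smul_v₀_add_ι (1 : K) 0 0 (x ᵥ* A)
    simp only [one_smul, map_zero, add_zero, zero_add, zero_smul, sub_zero,
      wedgeTail_zero_left] at h₁ h₂
    rw [h₁, h₂]
  rw [vecMulLinear_apply, vecMulLinear_apply, hx, hg2, hι, hι, hv₀,
    vecMul_fromBlocks_smul_v₀_add_ι, wedge_smul_v₀_add_ι] at h
  simpa [Sum.elim_eq_iff] using h

lemma map_sum_elim_zero_of_map_ι (hg2 : ∀ x y, g2 (wedge x y) = wedge (g x) (g y))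
    (hι : ∀ y, g (ι K n y) = ι K n (y ᵥ* B)) (z : {q : Fin n × Fin n // q.1 < q.2} → K) :
    ∃ z', g2 (Sum.elim (0 : Fin n → K) z) = Sum.elim (0 : Fin n → K) z' := by
  refine ⟨∑ q, z q • wedgeTail (Pi.single q.1.1 1 ᵥ* B) (Pi.single q.1.2 1 ᵥ* B), ?_⟩
  rw [sum_elim_zero_eq_sum_wedge, map_sum]
  simp only [map_smul, hg2]
  simp only [hι, wedge_ι_ι]
  ext (_ | _) <;> simp [Finset.sum_apply]

/-- The `v₀`-row of `f` is `v₀ ∧ ι (b 0)` plus an element of `Λ²Fⁿ`, which `Λ²g` preserves. -/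
lemma smul_vecMul_eq_of_map_ι (hg2 : ∀ x y, g2 (wedge x y) = wedge (g x) (g y))
    (hcomm : ∀ v, (fromBlocks b c A 0).vecMulLinear (g v) =
      g2 ((fromBlocks b c A 0).vecMulLinear v))
    (hv₀ : g (v₀ K n) = a • v₀ K n) (hι : ∀ y, g (ι K n y) = ι K n (y ᵥ* B)) :
    a • (b 0 ᵥ* B) = a • b 0 := by
  have hf : v₀ K n ᵥ* fromBlocks b c A 0 =
      wedge (v₀ K n) (ι K n (b 0)) + Sum.elim (0 : Fin n → K) (c 0) := by
    have h₁ := vecMul_fromBlocks_smul_v₀_add_ι b c A 1 0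
    have h₂ := wedge_smul_v₀_add_ι (1 : K) 0 0 (b 0)
    simp only [one_smul, map_zero, add_zero, zero_add, zero_smul, sub_zero, zero_vecMul,
      wedgeTail_zero_left] at h₁ h₂
    rw [h₁, h₂]
    ext (_ | _) <;> simp
  obtain ⟨z, hz⟩ := map_sum_elim_zero_of_map_ι hg2 hι (c 0)
  have h := hcomm (v₀ K n)
  rw [vecMulLinear_apply, vecMulLinear_apply, hf, map_add, hg2, hz, hv₀, hι] at h
  have h₁ := vecMul_fromBlocks_smul_v₀_add_ι b c A a 0
  have h₂ := wedge_smul_v₀_add_ι a 0 0 (b 0 ᵥ* B)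
  simp only [map_zero, add_zero, zero_add, zero_smul, sub_zero, zero_vecMul,
    wedgeTail_zero_left] at h₁ h₂
  rw [h₁, h₂] at h
  ext j
  simpa using (congrFun h (Sum.inl j)).symm

lemma mul_eq_smul_mul_of_map_ι (hg2 : ∀ x y, g2 (wedge x y) = wedge (g x) (g y))
    (hcomm : ∀ v, (fromBlocks b c A 0).vecMulLinear (g v) =
      g2 ((fromBlocks b c A 0).vecMulLinear v))
    (hv₀ : g (v₀ K n) = a • v₀ K n) (hι : ∀ y, g (ι K n y) = ι K n (y ᵥ* B)) :
    B * A = a • (A * B) :=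
  ext_iff_vecMul.2 fun x => by
    simpa [vecMul_vecMul, vecMul_smul] using (blockForm_relations (u := 0) (w := 0) hg2 hcomm
      (by simpa using hv₀) (by simpa using hι) x).1

end Relations

section Stabilizer

variable {K : Type*} [Field K] {n : ℕ}
  {g : ((Fin 1 ⊕ Fin n) → K) →ₗ[K] (Fin 1 ⊕ Fin n) → K} {g2 : (WIdx n → K) →ₗ[K] WIdx n → K}
  {a : K} {u w : Fin n → K} {B : Matrix (Fin n) (Fin n) K}

/-- If `u ≠ 0`, then `g` maps the `n`-dimensional space `F v₀ ⊕ ι (ker (· ⬝ᵥ w) ᵥ* A)` into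
`span {v₀, ι u}`. -/
lemma eq_zero_of_wedgeTail_eq_zero {A : Matrix (Fin n) (Fin n) K} (hn : 3 ≤ n)
    (hg : Function.Injective g) (hA : IsUnit A) (hv₀ : g (v₀ K n) = a • v₀ K n + ι K n u)
    (hι : ∀ y, g (ι K n y) = (y ⬝ᵥ w) • v₀ K n + ι K n (y ᵥ* B))
    (h : ∀ x, x ⬝ᵥ w = 0 → wedgeTail u (x ᵥ* A ᵥ* B) = 0) : u = 0 := by
  by_contra hu
  let T := Submodule.span K (Set.range ![v₀ K n, ι K n u])
  have hv₀T : v₀ K n ∈ T := Submodule.subset_span ⟨0, rfl⟩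
  have huT : ι K n u ∈ T := Submodule.subset_span ⟨1, rfl⟩
  have hT : finrank K T ≤ 2 :=
    (finrank_range_le_card (R := K) ![v₀ K n, ι K n u]).trans (by simp)
  have hdet := (isUnit_iff_isUnit_det A).1 hA
  have := le_finrank_of_injective_of_mapsTo hg T
    ((dotProductBilin K K).flip w ∘ₗ A⁻¹.vecMulLinear)
    (by rw [hv₀]; exact T.add_mem (T.smul_mem a hv₀T) huT) fun y hy => by
      obtain ⟨t, ht⟩ := Submodule.mem_span_singleton.1 (mem_span_singleton_of_wedgeTail_eq_zero hu
        (by simpa [vecMul_vecMul, nonsing_inv_mul _ hdet] using h _ hy))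
      rw [hι, ← ht, map_smul]
      exact T.add_mem (T.smul_mem _ hv₀T) (T.smul_mem _ huT)
  omega

lemma exists_blockDiagonal_of_intertwines {A : Matrix (Fin n) (Fin n) K}
    {b : Matrix (Fin 1) (Fin n) K} {c : Matrix (Fin 1) {q : Fin n × Fin n // q.1 < q.2} K}
    (hn : 3 ≤ n) (hA : IsUnit A) (hc : c 0 ≠ 0) (hg : Function.Injective g)
    (hg2 : ∀ x y, g2 (wedge x y) = wedge (g x) (g y))
    (hcomm : ∀ v, (fromBlocks b c A 0).vecMulLinear (g v) =
      g2 ((fromBlocks b c A 0).vecMulLinear v)) :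
    ∃ (a : K) (B : Matrix (Fin n) (Fin n) K),
      g (v₀ K n) = a • v₀ K n ∧ ∀ y, g (ι K n y) = ι K n (y ᵥ* B) := by
  obtain ⟨a, u, w, B, hv₀, hι⟩ := exists_blockForm g
  have hrel := blockForm_relations hg2 hcomm hv₀ hι
  obtain rfl : u = 0 := eq_zero_of_wedgeTail_eq_zero hn hg hA hv₀ hι fun x hx => by
    simpa [hx] using (hrel x).2.symm
  obtain rfl : w = 0 := funext fun i => by
    have := (hrel (Pi.single i 1)).2
    simp only [single_one_dotProduct, wedgeTail_zero_left] at this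
    exact (smul_eq_zero.1 this).resolve_right hc
  exact ⟨a, B, by simpa using hv₀, fun y => by simpa using hι y⟩

lemma ne_zero_and_isUnit_of_map_ι (hg : Function.Injective g)
    (hv₀ : g (v₀ K n) = a • v₀ K n) (hι : ∀ y, g (ι K n y) = ι K n (y ᵥ* B)) :
    a ≠ 0 ∧ IsUnit B := by
  refine ⟨fun ha => ?_, vecMul_injective_iff_isUnit.1 fun y y' h => ι_injective (hg ?_)⟩
  · have h₀ : v₀ K n = 0 := hg (by rw [hv₀, ha, zero_smul, map_zero])
    simpa [v₀] using congrFun h₀ (Sum.inl 0)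
  · rw [hι, hι]
    exact congrArg (ι K n) h

end Stabilizer

theorem stmt12_general (p n : ℕ) [Fact p.Prime] (hn : 3 ≤ n)
    (α : GaloisField p n) (hα : orderOf α = p ^ n - 1)
    (m : Polynomial (ZMod p)) (hm : m = minpoly (ZMod p) α)
    (A : Matrix (Fin n) (Fin n) (ZMod p))
    (hchar : A.charpoly = m)
    (b : Matrix (Fin 1) (Fin n) (ZMod p)) (hb : b ≠ 0)
    (c : Matrix (Fin 1) {q : Fin n × Fin n // q.1 < q.2} (ZMod p)) (hc : c ≠ 0)
    (f : ((Fin 1 ⊕ Fin n) → ZMod p) →ₗ[ZMod p] (WIdx n → ZMod p))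
    (hf : f = (Matrix.fromBlocks b c A 0).vecMulLinear)
    (g : ((Fin 1 ⊕ Fin n) → ZMod p) ≃ₗ[ZMod p] ((Fin 1 ⊕ Fin n) → ZMod p))
    (g2 : (WIdx n → ZMod p) →ₗ[ZMod p] (WIdx n → ZMod p))
    (hg2 : ∀ x y : (Fin 1 ⊕ Fin n) → ZMod p, g2 (wedge x y) = wedge (g x) (g y))
    (hcomm : ∀ v : (Fin 1 ⊕ Fin n) → ZMod p, f (g v) = g2 (f v)) :
    g = LinearEquiv.refl (ZMod p) ((Fin 1 ⊕ Fin n) → ZMod p) := by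
  subst hf hm
  have hirr : Irreducible A.charpoly :=
    hchar ▸ minpoly.irreducible (Algebra.IsIntegral.isIntegral α)
  have hA := isUnit_of_irreducible_charpoly (by omega) hirr
  have hb₀ : b 0 ≠ 0 := fun h => hb (ext fun i j => by simp [Subsingleton.elim i 0, h])
  have hc₀ : c 0 ≠ 0 := fun h => hc (ext fun i j => by simp [Subsingleton.elim i 0, h])
  obtain ⟨a, B, hv₀, hι⟩ := exists_blockDiagonal_of_intertwines hn hA hc₀ g.injective hg2 hcomm
  obtain ⟨ha, hB⟩ := ne_zero_and_isUnit_of_map_ι g.injective hv₀ hι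
  have hBA := mul_eq_smul_mul_of_map_ι hg2 hcomm hv₀ hι
  have hminA := minpoly_eq_charpoly_of_irreducible hirr
  obtain rfl : a = 1 := by
    refine eq_one_of_aeval_smul_minpoly_eq_zero (by rw [hα, GaloisField.card p n (by omega)])
      (aeval_smul_minpoly_eq_zero (hminA.trans hchar) ?_)
    rw [hminA, ← charpoly_smul_eq_of_mul_eq hB hBA]
    exact aeval_self_charpoly _
  obtain rfl : B = 1 := eq_one_of_commute_of_vecMul_eq hirr
    (by rw [one_smul] at hBA; exact hBA.symm)
    (smul_right_injective _ ha (smul_vecMul_eq_of_map_ι hg2 hcomm hv₀ hι)) hb₀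
  simp only [LinearEquiv.coe_coe, one_smul, vecMul_one] at hv₀ hι
  refine LinearEquiv.ext fun v => ?_
  rw [eq_smul_v₀_add_ι v, map_add, map_smul, hv₀, hι, LinearEquiv.refl_apply]

/-- Let `p` be a prime, `n ≥ 3`, `F = GF(p)`, `V = F^(n+1)` with basis
`v₀, …, v_n` and `W = Λ²V`. Let `α` be a primitive element of `GF(pⁿ)`, `m` its minimal
polynomial over `F`, and `A` the `n × n` companion matrix of `m` (the matrix whose
characteristic and minimal polynomials equal `m`). Let `f : V → W` be the linear map whose
matrix with respect to these bases is the block matrix `[[b, c], [A, 0]]` with `b` a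
nonzero `1 × n` row vector and `c` a nonzero `1 × C(n,2)` row vector. Then the group
`G = {g ∈ GL(V) : f(g(v)) = (Λ²g)(f(v)) for all v ∈ V}` is trivial: every such `g` is the
identity. Here `Λ²g` is the (unique) linear map on `W` with `(Λ²g)(x ∧ y) = g(x) ∧ g(y)`. -/
theorem stmt12 (p n : ℕ) [Fact p.Prime] (hn : 3 ≤ n)
    (α : GaloisField p n) (hα : orderOf α = p ^ n - 1)
    (m : Polynomial (ZMod p)) (hm : m = minpoly (ZMod p) α)
    (A : Matrix (Fin n) (Fin n) (ZMod p))
    (hchar : A.charpoly = m) (hminA : minpoly (ZMod p) A = m)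
    (b : Matrix (Fin 1) (Fin n) (ZMod p)) (hb : b ≠ 0)
    (c : Matrix (Fin 1) {q : Fin n × Fin n // q.1 < q.2} (ZMod p)) (hc : c ≠ 0)
    (f : ((Fin 1 ⊕ Fin n) → ZMod p) →ₗ[ZMod p] (WIdx n → ZMod p))
    (hf : f = (Matrix.fromBlocks b c A 0).vecMulLinear)
    (g : ((Fin 1 ⊕ Fin n) → ZMod p) ≃ₗ[ZMod p] ((Fin 1 ⊕ Fin n) → ZMod p))
    (g2 : (WIdx n → ZMod p) →ₗ[ZMod p] (WIdx n → ZMod p))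
    (hg2 : ∀ x y : (Fin 1 ⊕ Fin n) → ZMod p, g2 (wedge x y) = wedge (g x) (g y))
    (hcomm : ∀ v : (Fin 1 ⊕ Fin n) → ZMod p, f (g v) = g2 (f v)) :
    g = LinearEquiv.refl (ZMod p) ((Fin 1 ⊕ Fin n) → ZMod p) :=
  stmt12_general p n hn α hα m hm A hchar b hb c hc f hf g g2 hg2 hcomm
end

section
/- Let p be a prime, n ≥ 1, F = GF(p), α a primitive element of GF(p^n), m its minimal polynomial over F, and A the n×n companion matrix of m. If for some integer k ≥ 0 the matrix A^k has 1 as an eigenvalue (i.e., there is a nonzero vector v ∈ F^n with v·A^k = v), then A^k is the identity matrix, equivalently (p^n − 1) divides k. -/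
/-! The minimal polynomial `m` of `α` is irreducible, and `Aᵏ - 1` is singular, so `m` cannot be
coprime to `Xᵏ - 1` (a Bézout identity would invert `Aᵏ - 1`); hence `m ∣ Xᵏ - 1`. Evaluating at
`A` gives `Aᵏ = 1`, and evaluating at `α` gives `αᵏ = 1`, so the order `pⁿ - 1` of `α` divides `k`. -/

open Polynomial
open scoped Matrix

theorem minpoly_dvd_of_not_isUnit_aeval {K R : Type*} [Field K] [Ring R] [Algebra K R] {a : R}
    (hirr : Irreducible (minpoly K a)) {f : K[X]} (hf : ¬IsUnit (aeval a f)) :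
    minpoly K a ∣ f := by
  by_contra hndvd
  obtain ⟨g, h, hbezout⟩ := hirr.coprime_iff_not_dvd.2 hndvd
  have hinv : aeval a h * aeval a f = 1 := by
    simpa using congrArg (aeval a) hbezout
  have hinv' : aeval a f * aeval a h = 1 := by
    rw [← map_mul, mul_comm, map_mul, hinv]
  exact hf ⟨⟨_, _, hinv', hinv⟩, rfl⟩

theorem Matrix.not_isUnit_sub_one_of_vecMul_eq_self {ι K : Type*} [Fintype ι] [DecidableEq ι]
    [Field K] {M : Matrix ι ι K} {v : ι → K} (hv : v ≠ 0) (hfix : v ᵥ* M = v) :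
    ¬IsUnit (M - 1) := by
  rw [Matrix.isUnit_iff_isUnit_det, isUnit_iff_ne_zero, not_not,
    ← Matrix.exists_vecMul_eq_zero_iff]
  exact ⟨v, hv, by rw [Matrix.vecMul_sub, hfix, Matrix.vecMul_one, sub_self]⟩

theorem pow_eq_one_of_minpoly_dvd_X_pow_sub_one {K R : Type*} [Field K] [Ring R] [Algebra K R]
    {a : R} {k : ℕ} (hdvd : minpoly K a ∣ X ^ k - 1) : a ^ k = 1 := by
  obtain ⟨c, hc⟩ := hdvd
  have h := congrArg (aeval a) hc
  rwa [map_mul, minpoly.aeval, zero_mul, map_sub, map_pow, aeval_X, map_one, sub_eq_zero] at h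

theorem stmt14_general (p n : ℕ) [Fact p.Prime]
    (α : GaloisField p n) (hα : orderOf α = p ^ n - 1)
    (m : Polynomial (ZMod p)) (hm : m = minpoly (ZMod p) α)
    (A : Matrix (Fin n) (Fin n) (ZMod p))
    (hminA : minpoly (ZMod p) A = m)
    (k : ℕ) (v : Fin n → ZMod p) (hv : v ≠ 0) (hfix : Matrix.vecMul v (A ^ k) = v) :
    A ^ k = 1 ∧ (p ^ n - 1) ∣ k := by
  have hirr : Irreducible (minpoly (ZMod p) A) :=
    hminA ▸ hm ▸ minpoly.irreducible (Algebra.IsIntegral.isIntegral α)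
  have hdvd : m ∣ X ^ k - 1 := by
    refine hminA ▸ minpoly_dvd_of_not_isUnit_aeval hirr ?_
    simpa using Matrix.not_isUnit_sub_one_of_vecMul_eq_self hv hfix
  refine ⟨pow_eq_one_of_minpoly_dvd_X_pow_sub_one (hminA ▸ hdvd), ?_⟩
  exact hα ▸ orderOf_dvd_of_pow_eq_one (pow_eq_one_of_minpoly_dvd_X_pow_sub_one (hm ▸ hdvd))

/-- Let `p` be a prime, `n ≥ 1`, `F = GF(p)`, `α` a primitive element of
`GF(pⁿ)`, `m` its minimal polynomial over `F`, and `A` the `n × n` companion matrix of `m`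
(the matrix whose characteristic and minimal polynomials equal `m`). If for some `k ≥ 0`
the matrix `A^k` has `1` as an eigenvalue (there is a nonzero row vector `v` with
`v · A^k = v`), then `A^k` is the identity; equivalently `pⁿ - 1` divides `k`. -/
theorem stmt14 (p n : ℕ) [Fact p.Prime] (hn : 1 ≤ n)
    (α : GaloisField p n) (hα : orderOf α = p ^ n - 1)
    (m : Polynomial (ZMod p)) (hm : m = minpoly (ZMod p) α)
    (A : Matrix (Fin n) (Fin n) (ZMod p))
    (hchar : A.charpoly = m) (hminA : minpoly (ZMod p) A = m)
    (k : ℕ) (v : Fin n → ZMod p) (hv : v ≠ 0) (hfix : Matrix.vecMul v (A ^ k) = v) :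
    A ^ k = 1 ∧ (p ^ n - 1) ∣ k :=
  stmt14_general p n α hα m hm A hminA k v hv hfix
end

section
/- Let F be a field and A the n×n companion matrix over F of a monic irreducible polynomial of degree n ≥ 1. If γ ∈ F is nonzero and Δ is an n×n matrix over F satisfying Δ A = γ A Δ, then either Δ = 0 or Δ is invertible. -/
/-!
Since `Δ (A x) = γ • A (Δ x)`, the kernel of `Δ` is `A`-invariant. An endomorphism `f` with
irreducible characteristic polynomial has no invariant subspaces besides `0` and the whole
space: on a nonzero invariant subspace `K`, the minimal polynomial of `f|K` is a non-unit
divisor of the irreducible `charpoly f`, hence an associate of it, so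
`dim V = deg (charpoly f) ≤ deg (minpoly f|K) ≤ dim K`.
-/

open Polynomial Module

namespace Module.End

theorem aeval_restrict_apply {R M : Type*} [CommSemiring R] [AddCommMonoid M] [Module R M]
    (f : End R M) {K : Submodule R M} (hK : ∀ x ∈ K, f x ∈ K) (p : R[X]) (x : K) :
    (aeval (f.restrict hK) p x : M) = aeval f p x := by
  induction p using Polynomial.induction_on' with
  | add p q hp hq => simp [hp, hq]
  | monomial k a => simp [pow_restrict k hK, LinearMap.restrict_apply]

variable {F V : Type*} [Field F] [AddCommGroup V] [Module F V]

theorem minpoly_restrict_dvd (f : End F V) {K : Submodule F V} (hK : ∀ x ∈ K, f x ∈ K) :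
    minpoly F (f.restrict hK) ∣ minpoly F f :=
  minpoly.dvd _ _ <| LinearMap.ext fun x ↦ Subtype.ext <| by
    simp [aeval_restrict_apply, minpoly.aeval]

theorem eq_bot_or_eq_top_of_irreducible_charpoly [FiniteDimensional F V] (f : End F V)
    (hf : Irreducible f.charpoly) {K : Submodule F V} (hK : ∀ x ∈ K, f x ∈ K) :
    K = ⊥ ∨ K = ⊤ := by
  refine or_iff_not_imp_left.mpr fun hK0 ↦ ?_
  have : Nontrivial K := Submodule.nontrivial_iff_ne_bot.mpr hK0
  set g := f.restrict hK
  have hg : IsIntegral F g := Algebra.IsIntegral.isIntegral g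
  have hdvd : f.charpoly ∣ minpoly F g := by
    refine ((hf.dvd_iff.mp ?_).resolve_left fun h ↦ ?_).dvd
    · exact (minpoly_restrict_dvd f hK).trans (LinearMap.minpoly_dvd_charpoly f)
    · exact (minpoly.natDegree_pos hg).ne' (natDegree_eq_zero_of_isUnit h)
  refine Submodule.eq_top_of_finrank_eq (le_antisymm (Submodule.finrank_le K) ?_)
  calc finrank F V = f.charpoly.natDegree := f.charpoly_natDegree.symm
    _ ≤ (minpoly F g).natDegree := natDegree_le_of_dvd hdvd (minpoly.ne_zero hg)
    _ ≤ g.charpoly.natDegree :=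
      natDegree_le_of_dvd (LinearMap.minpoly_dvd_charpoly g) g.charpoly_monic.ne_zero
    _ = finrank F K := g.charpoly_natDegree

end Module.End

namespace Matrix

theorem eq_zero_or_isUnit_of_mul_eq_smul_mul {F n : Type*} [Field F] [Fintype n]
    [DecidableEq n] {A Δ : Matrix n n F} (hA : Irreducible A.charpoly) {γ : F}
    (hcomm : Δ * A = γ • (A * Δ)) : Δ = 0 ∨ IsUnit Δ := by
  have hker : ∀ x ∈ LinearMap.ker (toLin' Δ), toLin' A x ∈ LinearMap.ker (toLin' Δ) := by
    intro x hx
    rw [LinearMap.mem_ker, toLin'_apply] at hx ⊢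
    rw [toLin'_apply, mulVec_mulVec, hcomm, smul_mulVec, ← mulVec_mulVec, hx, mulVec_zero,
      smul_zero]
  rw [← charpoly_toLin'] at hA
  refine (Module.End.eq_bot_or_eq_top_of_irreducible_charpoly _ hA hker).symm.imp
    (fun h ↦ ?_) fun h ↦ ?_
  · exact toLin'.map_eq_zero_iff.mp (LinearMap.ker_eq_top.mp h)
  · exact mulVec_injective_iff_isUnit.mp (LinearMap.ker_eq_bot.mp h)

end Matrix

theorem stmt16_general (F : Type*) [Field F] (n : ℕ)
    (m : Polynomial F) (hirr : Irreducible m)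
    (A : Matrix (Fin n) (Fin n) F)
    (hchar : A.charpoly = m)
    (γ : F) (Δ : Matrix (Fin n) (Fin n) F)
    (hcomm : Δ * A = γ • (A * Δ)) :
    Δ = 0 ∨ IsUnit Δ :=
  Matrix.eq_zero_or_isUnit_of_mul_eq_smul_mul (hchar ▸ hirr) hcomm

/-- Let `F` be a field and `A` the `n × n` companion matrix over `F` of a
monic irreducible polynomial `m` of degree `n ≥ 1` (the matrix whose characteristic and
minimal polynomials equal `m`). If `γ ∈ F` is nonzero and `Δ` is an `n × n` matrix over `F`
with `Δ A = γ A Δ`, then either `Δ = 0` or `Δ` is invertible. -/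
theorem stmt16 (F : Type*) [Field F] (n : ℕ) (hn : 1 ≤ n)
    (m : Polynomial F) (hmonic : m.Monic) (hirr : Irreducible m) (hdeg : m.natDegree = n)
    (A : Matrix (Fin n) (Fin n) F)
    (hchar : A.charpoly = m) (hminA : minpoly F A = m)
    (γ : F) (hγ : γ ≠ 0) (Δ : Matrix (Fin n) (Fin n) F)
    (hcomm : Δ * A = γ • (A * Δ)) :
    Δ = 0 ∨ IsUnit Δ :=
  stmt16_general F n m hirr A hchar γ Δ hcomm
end

section
/- Let p be an odd prime and P a finite p-group in which every automorphism is central, i.e., for every automorphism φ of P and every a ∈ P, φ(a)·a^{-1} lies in the center Z(P). If a ∈ P does not lie in Z(P), then no automorphism of P maps a to a^{-1}. -/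
theorem IsPGroup.mem_of_pow_mem {p : ℕ} {G : Type*} [Group G] {N : Subgroup G} [N.Normal]
    (hQ : IsPGroup p (G ⧸ N)) {n : ℕ} (hn : p.Coprime n) {a : G} (ha : a ^ n ∈ N) : a ∈ N := by
  rw [← QuotientGroup.eq_one_iff] at ha ⊢
  refine (hQ.powEquiv hn).injective ?_
  simpa [IsPGroup.powEquiv_apply] using ha

theorem stmt18_general (p : ℕ) (hodd : Odd p)
    (P : Type*) [Group P] (hP : IsPGroup p P)
    (hcentral : ∀ φ : MulAut P, ∀ a : P, φ a * a⁻¹ ∈ Subgroup.center P)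
    (a : P) (ha : a ∉ Subgroup.center P) :
    ∀ φ : MulAut P, φ a ≠ a⁻¹ := by
  intro φ hφ
  have hsq : a ^ 2 ∈ Subgroup.center P := by
    have h := (Subgroup.center P).inv_mem (hcentral φ a)
    rwa [hφ, mul_inv_rev, inv_inv, ← pow_two] at h
  exact ha ((hP.to_quotient _).mem_of_pow_mem (Nat.coprime_two_right.mpr hodd) hsq)

/-- Let `p` be an odd prime and `P` a finite `p`-group in which every
automorphism is central (for every automorphism `φ` and every `a ∈ P`, `φ(a)·a⁻¹ ∈ Z(P)`).
If `a ∈ P` does not lie in the center, then no automorphism of `P` maps `a` to `a⁻¹`. -/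
theorem stmt18 (p : ℕ) (hp : p.Prime) (hodd : Odd p)
    (P : Type*) [Group P] [Finite P] (hP : IsPGroup p P)
    (hcentral : ∀ φ : MulAut P, ∀ a : P, φ a * a⁻¹ ∈ Subgroup.center P)
    (a : P) (ha : a ∉ Subgroup.center P) :
    ∀ φ : MulAut P, φ a ≠ a⁻¹ :=
  stmt18_general p hodd P hP hcentral a ha
end
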